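/- arXiv:1904.03664 — 4 statements merged into one kernel-verified Lean document; each statement's English description precedes it below -/
import Mathlib

section
/- Let β ≥ 0 and let a, b, c, d be nonnegative real numbers with b > 0, d > 0, a ≤ b, c ≤ d, a ≤ c and b − a ≤ d − c. Then d·F_β(c/d) − b·F_β(a/b) ≤ 0. -/
/-!
Substituting `u = v / y` gives `y F_β(x/y) = ∫_0^{min(x, y-x)} log f_β(v/y) dv`. Writing
`s = 1 - 2u`, `f_β` is a decreasing function of `s ∈ [0,1]`, so it increases on `[0, 1/2]`
from `f_β(0) = e^{-2β} > 0` to `f_β(1/2) = 1`; hence `log f_β` is increasing and nonpositive there.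
The hypotheses give `b ≤ d` and `m := min(a, b-a) ≤ min(c, d-c) =: n`. On `[0, m]` the
`d`-integrand is below the `b`-integrand because `v/d ≤ v/b`, and on `[m, n]` it is `≤ 0`.
-/

/-- `f_β(u) = (e^{-2β}(1-2u) + √(1 + (e^{-4β}-1)(1-2u)²)) / (2(1-u))`. -/
noncomputable def fBeta (β u : ℝ) : ℝ :=
  (Real.exp (-2*β) * (1-2*u) + Real.sqrt (1 + (Real.exp (-4*β) - 1) * (1-2*u)^2)) / (2*(1-u))

/-- `F_β(t) = ∫_0^{min(t,1-t)} log f_β(u) du`. -/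
noncomputable def FBeta (β t : ℝ) : ℝ :=
  ∫ u in (0:ℝ)..(min t (1-t)), Real.log (fBeta β u)

open Real Set

lemma antitoneOn_div_one_add {E : ℝ} (hE : E ^ 2 ≤ 1) :
    AntitoneOn (fun s : ℝ => (E * s + √(1 + (E ^ 2 - 1) * s ^ 2)) / (1 + s)) (Icc 0 1) := by
  intro s ⟨hs0, hs1⟩ t _ hst
  have hRst : √(1 + (E ^ 2 - 1) * t ^ 2) ≤ √(1 + (E ^ 2 - 1) * s ^ 2) :=
    sqrt_le_sqrt (by nlinarith [mul_le_mul hst hst hs0 (hs0.trans hst)])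
  have hER : E ≤ √(1 + (E ^ 2 - 1) * s ^ 2) :=
    calc E ≤ |E| := le_abs_self E
      _ = √(E ^ 2) := (sqrt_sq_eq_abs E).symm
      _ ≤ _ := sqrt_le_sqrt (by nlinarith [mul_le_mul hs1 hs1 hs0 zero_le_one])
  rw [div_le_div_iff₀ (by linarith) (by linarith)]
  nlinarith [mul_le_mul_of_nonneg_right hER (sub_nonneg.2 hst),
    mul_le_mul_of_nonneg_right hRst (by linarith : (0:ℝ) ≤ 1 + s)]

lemma fBeta_eq (β u : ℝ) :
    fBeta β u = (exp (-2*β) * (1 - 2*u) + √(1 + (exp (-2*β) ^ 2 - 1) * (1 - 2*u) ^ 2))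
      / (1 + (1 - 2*u)) := by
  rw [fBeta, ← exp_nat_mul]
  ring_nf

lemma monotoneOn_fBeta {β : ℝ} (hβ : 0 ≤ β) : MonotoneOn (fBeta β) (Icc 0 (1/2)) := by
  have hE : exp (-2*β) ^ 2 ≤ 1 := pow_le_one₀ (exp_pos _).le (exp_le_one_iff.2 (by linarith))
  intro u ⟨hu0, hu1⟩ v ⟨hv0, hv1⟩ huv
  simp only [fBeta_eq]
  exact antitoneOn_div_one_add hE ⟨by linarith, by linarith⟩ ⟨by linarith, by linarith⟩
    (by linarith)

lemma fBeta_zero (β : ℝ) : fBeta β 0 = exp (-2*β) := by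
  rw [fBeta_eq]
  norm_num [sqrt_sq (exp_pos _).le]

lemma fBeta_half (β : ℝ) : fBeta β (1/2) = 1 := by
  norm_num [fBeta]

lemma fBeta_pos {β u : ℝ} (hβ : 0 ≤ β) (hu : u ∈ Icc (0:ℝ) (1/2)) : 0 < fBeta β u :=
  (fBeta_zero β ▸ exp_pos _).trans_le
    (monotoneOn_fBeta hβ ⟨le_rfl, by norm_num⟩ hu hu.1)

lemma monotoneOn_log_fBeta {β : ℝ} (hβ : 0 ≤ β) :
    MonotoneOn (fun u => log (fBeta β u)) (Icc 0 (1/2)) := fun _ hu _ hv huv =>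
  log_le_log (fBeta_pos hβ hu) (monotoneOn_fBeta hβ hu hv huv)

lemma mul_integral_min_div (g : ℝ → ℝ) {x y : ℝ} (hy : 0 < y) :
    y * ∫ u in (0:ℝ)..min (x/y) (1 - x/y), g u = ∫ v in (0:ℝ)..min x (y - x), g (v/y) := by
  rw [intervalIntegral.integral_comp_div g hy.ne', zero_div, smul_eq_mul, ← min_div_div_right hy.le,
    sub_div, div_self hy.ne']

lemma div_mem_Icc_half {v y : ℝ} (hy : 0 < y) (hv : v ∈ Icc 0 (y/2)) : v / y ∈ Icc (0:ℝ) (1/2) :=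
  ⟨div_nonneg hv.1 hy.le, by rw [div_le_iff₀ hy]; linarith [hv.2]⟩

lemma MonotoneOn.comp_div {g : ℝ → ℝ} (hg : MonotoneOn g (Icc 0 (1/2))) {y : ℝ} (hy : 0 < y) :
    MonotoneOn (fun v => g (v/y)) (Icc 0 (y/2)) := fun _ hv _ hw hvw =>
  hg (div_mem_Icc_half hy hv) (div_mem_Icc_half hy hw) (by gcongr)

lemma MonotoneOn.intervalIntegrable_comp_div {g : ℝ → ℝ} (hg : MonotoneOn g (Icc 0 (1/2)))
    {y m n : ℝ} (hy : 0 < y) (hm : 0 ≤ m) (hmn : m ≤ n) (hn : 2 * n ≤ y) :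
    IntervalIntegrable (fun v => g (v/y)) MeasureTheory.volume m n :=
  ((hg.comp_div hy).mono <| by
    rw [uIcc_of_le hmn]; exact Icc_subset_Icc hm (by linarith)).intervalIntegrable

lemma MonotoneOn.integral_comp_div_le {g : ℝ → ℝ} (hg : MonotoneOn g (Icc 0 (1/2)))
    (hg_half : g (1/2) ≤ 0) {b d m n : ℝ} (hb : 0 < b) (hbd : b ≤ d) (hm : 0 ≤ m) (hmn : m ≤ n)
    (hmb : 2 * m ≤ b) (hnd : 2 * n ≤ d) :
    ∫ v in (0:ℝ)..n, g (v/d) ≤ ∫ v in (0:ℝ)..m, g (v/b) := by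
  have hd : 0 < d := hb.trans_le hbd
  have hhalf : (1/2 : ℝ) ∈ Icc 0 (1/2) := ⟨by norm_num, le_rfl⟩
  have h_head : ∫ v in (0:ℝ)..m, g (v/d) ≤ ∫ v in (0:ℝ)..m, g (v/b) := by
    refine intervalIntegral.integral_mono_on hm (hg.intervalIntegrable_comp_div hd le_rfl hm
      (by linarith)) (hg.intervalIntegrable_comp_div hb le_rfl hm hmb) fun v hv => ?_
    exact hg (div_mem_Icc_half hd ⟨hv.1, by linarith [hv.2]⟩)
      (div_mem_Icc_half hb ⟨hv.1, by linarith [hv.2]⟩) (by gcongr; exact hv.1)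
  have h_tail : ∫ v in m..n, g (v/d) ≤ 0 := by
    have := intervalIntegral.integral_mono_on hmn (hg.intervalIntegrable_comp_div hd hm hmn hnd)
      intervalIntegrable_const fun v hv =>
        (hg (div_mem_Icc_half hd ⟨hm.trans hv.1, by linarith [hv.2]⟩) hhalf
          (by rw [div_le_iff₀ hd]; linarith [hv.2])).trans hg_half
    simpa using this
  rw [← intervalIntegral.integral_add_adjacent_intervals
    (hg.intervalIntegrable_comp_div hd le_rfl hm (by linarith))
    (hg.intervalIntegrable_comp_div hd hm hmn hnd)]
  linarith

lemma MonotoneOn.mul_integral_min_le {g : ℝ → ℝ} (hg : MonotoneOn g (Icc 0 (1/2)))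
    (hg_half : g (1/2) ≤ 0) {a b c d : ℝ} (ha : 0 ≤ a) (hb : 0 < b) (hab : a ≤ b) (hac : a ≤ c)
    (hba : b - a ≤ d - c) :
    d * ∫ u in (0:ℝ)..min (c/d) (1 - c/d), g u ≤ b * ∫ u in (0:ℝ)..min (a/b) (1 - a/b), g u := by
  have hd : 0 < d := by linarith
  rw [mul_integral_min_div g hd, mul_integral_min_div g hb]
  exact hg.integral_comp_div_le hg_half hb (by linarith) (le_min ha (by linarith))
    (min_le_min hac hba) (by linarith [min_le_left a (b - a), min_le_right a (b - a)])
    (by linarith [min_le_left c (d - c), min_le_right c (d - c)])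

theorem dFbeta_sub_bFbeta_nonpos_general (β a b c d : ℝ) (hβ : 0 ≤ β)
    (ha : 0 ≤ a) (hb : 0 < b)
    (hab : a ≤ b) (hac : a ≤ c) (hba : b - a ≤ d - c) :
    d * FBeta β (c/d) - b * FBeta β (a/b) ≤ 0 :=
  sub_nonpos.2 <| (monotoneOn_log_fBeta hβ).mul_integral_min_le
    (by rw [fBeta_half, log_one]) ha hb hab hac hba

/-- if `0 ≤ a ≤ b`, `0 ≤ c ≤ d`, `a ≤ c` and `b - a ≤ d - c`, with `b, d > 0`,
then `d·F_β(c/d) − b·F_β(a/b) ≤ 0` for every `β ≥ 0`. -/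
theorem dFbeta_sub_bFbeta_nonpos (β a b c d : ℝ) (hβ : 0 ≤ β)
    (ha : 0 ≤ a) (hb : 0 < b) (hc : 0 ≤ c) (hd : 0 < d)
    (hab : a ≤ b) (hcd : c ≤ d) (hac : a ≤ c) (hba : b - a ≤ d - c) :
    d * FBeta β (c/d) - b * FBeta β (a/b) ≤ 0 :=
  dFbeta_sub_bFbeta_nonpos_general β a b c d hβ ha hb hab hac hba
end

section
/- Let β ≥ 0. Then: (i) F_β(t) = F_β(1−t) for all t ∈ [0,1]; (ii) F_β(t) ≤ 0 for all t ∈ [0,1]; (iii) F_β is nonincreasing on [0,1/2]; (iv) F_β is convex on [0,1]. -/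
namespace FBetaAux

open Real Set MeasureTheory intervalIntegral

lemma exp4 (β : ℝ) : Real.exp (-4*β) = Real.exp (-2*β)^2 := by
  rw [sq, ← Real.exp_add]; ring_nf

lemma fBeta_pos {β : ℝ} (hβ : 0 ≤ β) {u : ℝ} (hu : u < 1) : 0 < fBeta β u := by
  have ha0 : 0 < Real.exp (-2*β) := Real.exp_pos _
  have hden : 0 < 2*(1-u) := by linarith
  unfold fBeta
  rw [exp4 β]
  set a := Real.exp (-2*β) with ha
  set v := 1 - 2*u with hv
  have hv1 : -1 < v := by simp [hv]; linarith
  apply div_pos _ hden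
  rcases lt_or_ge 0 v with h | h
  · have : 0 ≤ Real.sqrt (1 + (a^2-1)*v^2) := Real.sqrt_nonneg _
    nlinarith
  · -- v ≤ 0, -1 < v
    have hargs : a^2*v^2 < 1 + (a^2-1)*v^2 := by nlinarith
    have h1 : Real.sqrt (a^2*v^2) < Real.sqrt (1 + (a^2-1)*v^2) :=
      Real.sqrt_lt_sqrt (by positivity) hargs
    have h2 : Real.sqrt (a^2*v^2) = -(a*v) := by
      rw [show a^2*v^2 = (-(a*v))^2 by ring]
      exact Real.sqrt_sq (by nlinarith)
    linarith [h1, h2.symm.le]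

lemma fBeta_mono {β : ℝ} (hβ : 0 ≤ β) {u₁ u₂ : ℝ} (h0 : 0 ≤ u₁) (h12 : u₁ ≤ u₂)
    (h2 : u₂ ≤ 1/2) : fBeta β u₁ ≤ fBeta β u₂ := by
  have ha0 : 0 < Real.exp (-2*β) := Real.exp_pos _
  have ha1 : Real.exp (-2*β) ≤ 1 := Real.exp_le_one_iff.2 (by linarith)
  unfold fBeta
  rw [exp4 β]
  set a := Real.exp (-2*β) with ha
  set v₁ := 1 - 2*u₁ with hv1
  set v₂ := 1 - 2*u₂ with hv2
  have hv21 : v₂ ≤ v₁ := by simp [hv1, hv2]; linarith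
  have hv20 : 0 ≤ v₂ := by simp [hv2]; linarith
  have hv11 : v₁ ≤ 1 := by simp [hv1]; linarith
  have hv10 : 0 ≤ v₁ := hv20.trans hv21
  have hB1 : a^2 ≤ 1 + (a^2-1)*v₁^2 := by
    nlinarith [mul_nonneg (by nlinarith : (0:ℝ) ≤ 1 - a^2) (by nlinarith : (0:ℝ) ≤ 1 - v₁^2)]
  have hB12 : 1 + (a^2-1)*v₁^2 ≤ 1 + (a^2-1)*v₂^2 := by
    nlinarith [mul_nonneg (by nlinarith : (0:ℝ) ≤ 1 - a^2) (by nlinarith : (0:ℝ) ≤ v₁^2 - v₂^2)]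
  set s₁ := Real.sqrt (1 + (a^2-1)*v₁^2) with hs1
  set s₂ := Real.sqrt (1 + (a^2-1)*v₂^2) with hs2
  have hs12 : s₁ ≤ s₂ := Real.sqrt_le_sqrt hB12
  have has1 : a ≤ s₁ := by
    have := Real.sqrt_le_sqrt hB1
    rwa [Real.sqrt_sq ha0.le] at this
  have hs10 : 0 ≤ s₁ := Real.sqrt_nonneg _
  have hd1 : 0 < 2*(1-u₁) := by linarith
  have hd2 : 0 < 2*(1-u₂) := by linarith
  rw [div_le_div_iff₀ hd1 hd2]
  have e1 : 2*(1-u₁) = 1 + v₁ := by simp [hv1]; ring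
  have e2 : 2*(1-u₂) = 1 + v₂ := by simp [hv2]; ring
  rw [e1, e2]
  nlinarith [mul_nonneg (sub_nonneg.2 has1) (sub_nonneg.2 hv21),
    mul_nonneg (sub_nonneg.2 hs12) (by linarith : (0:ℝ) ≤ 1 + v₁)]

lemma fBeta_half (β : ℝ) : fBeta β (1/2) = 1 := by
  unfold fBeta
  norm_num

lemma fBeta_le_one {β : ℝ} (hβ : 0 ≤ β) {u : ℝ} (h0 : 0 ≤ u) (h : u ≤ 1/2) :
    fBeta β u ≤ 1 := by
  have := fBeta_mono hβ h0 h le_rfl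
  rwa [fBeta_half] at this

lemma log_nonpos' {β : ℝ} (hβ : 0 ≤ β) {u : ℝ} (h0 : 0 ≤ u) (h : u ≤ 1/2) :
    Real.log (fBeta β u) ≤ 0 :=
  Real.log_nonpos (fBeta_pos hβ (by linarith)).le (fBeta_le_one hβ h0 h)

lemma log_mono {β : ℝ} (hβ : 0 ≤ β) {u₁ u₂ : ℝ} (h0 : 0 ≤ u₁) (h12 : u₁ ≤ u₂)
    (h2 : u₂ ≤ 1/2) : Real.log (fBeta β u₁) ≤ Real.log (fBeta β u₂) :=
  (Real.log_le_log_iff (fBeta_pos hβ (by linarith)) (fBeta_pos hβ (by linarith))).2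
    (fBeta_mono hβ h0 h12 h2)

lemma cont_log {β : ℝ} (hβ : 0 ≤ β) :
    ContinuousOn (fun u => Real.log (fBeta β u)) (Set.Iio 1) := by
  have hc : ContinuousOn (fBeta β) (Set.Iio 1) := by
    unfold fBeta
    apply ContinuousOn.div
    · fun_prop
    · fun_prop
    · intro x hx
      simp only [Set.mem_Iio] at hx
      have : 0 < 2*(1-x) := by linarith
      exact this.ne'
  exact ContinuousOn.log hc fun x hx => (fBeta_pos hβ hx).ne'

/-- The one-sided antiderivative. -/
noncomputable def Gb (β x : ℝ) : ℝ := ∫ u in (0:ℝ)..x, Real.log (fBeta β u)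

lemma FBeta_eq (β t : ℝ) : FBeta β t = Gb β (min t (1-t)) := rfl

lemma intInt {β : ℝ} (hβ : 0 ≤ β) {x y : ℝ} (hx : x < 1) (hy : y < 1) :
    IntervalIntegrable (fun u => Real.log (fBeta β u)) volume x y := by
  apply ContinuousOn.intervalIntegrable
  apply (cont_log hβ).mono
  intro u hu
  rw [Set.mem_uIcc] at hu
  simp only [Set.mem_Iio]
  rcases hu with ⟨_, h⟩ | ⟨_, h⟩ <;> linarith

lemma Gb_deriv {β : ℝ} (hβ : 0 ≤ β) {x : ℝ} (hx : x < 1) :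
    HasDerivAt (Gb β) (Real.log (fBeta β x)) x :=
  intervalIntegral.integral_hasDerivAt_right (intInt hβ (by norm_num) hx)
    (ContinuousOn.stronglyMeasurableAtFilter isOpen_Iio (cont_log hβ) x hx)
    ((cont_log hβ).continuousAt (isOpen_Iio.mem_nhds hx))

lemma F_deriv_lt {β : ℝ} (hβ : 0 ≤ β) {t : ℝ} (ht : t < 1/2) :
    HasDerivAt (FBeta β) (Real.log (fBeta β t)) t := by
  apply (Gb_deriv hβ (by linarith : t < 1)).congr_of_eventuallyEq
  filter_upwards [Iio_mem_nhds ht] with s hs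
  rw [FBeta_eq, min_eq_left (by simp only [Set.mem_Iio] at hs; linarith)]

lemma F_deriv_gt {β : ℝ} (hβ : 0 ≤ β) {t : ℝ} (ht : 1/2 < t) :
    HasDerivAt (FBeta β) (-Real.log (fBeta β (1-t))) t := by
  have hinner : HasDerivAt (fun s : ℝ => 1 - s) (-1) t := by
    simpa using (hasDerivAt_id t).const_sub 1
  have h1 : HasDerivAt (fun s : ℝ => Gb β (1-s)) (Real.log (fBeta β (1-t)) * (-1)) t :=
    HasDerivAt.comp t (Gb_deriv hβ (by linarith : 1 - t < 1)) hinner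
  have h2 : HasDerivAt (fun s : ℝ => Gb β (1-s)) (-Real.log (fBeta β (1-t))) t := by
    simpa [mul_comm] using h1
  apply h2.congr_of_eventuallyEq
  filter_upwards [Ioi_mem_nhds ht] with s hs
  rw [FBeta_eq, min_eq_right (by simp only [Set.mem_Ioi] at hs; linarith)]

lemma F_deriv_half {β : ℝ} (hβ : 0 ≤ β) : HasDerivAt (FBeta β) 0 (1/2 : ℝ) := by
  have hlog : Real.log (fBeta β (1/2)) = 0 := by rw [fBeta_half]; exact Real.log_one
  have hG : HasDerivAt (Gb β) 0 (1/2 : ℝ) := by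
    have := Gb_deriv hβ (show (1/2:ℝ) < 1 by norm_num)
    rwa [hlog] at this
  have hinner : HasDerivAt (fun s : ℝ => 1 - s) (-1) (1/2 : ℝ) := by
    simpa using (hasDerivAt_id (1/2 : ℝ)).const_sub 1
  have hGR : HasDerivAt (fun s : ℝ => Gb β (1-s)) 0 (1/2 : ℝ) := by
    have hG2 : HasDerivAt (Gb β) 0 ((fun s : ℝ => 1 - s) (1/2 : ℝ)) := by
      rw [show (fun s : ℝ => 1 - s) (1/2 : ℝ) = 1/2 by norm_num]
      exact hG
    have := HasDerivAt.comp (1/2 : ℝ) hG2 hinner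
    rw [zero_mul] at this
    exact this
  have hL : HasDerivWithinAt (FBeta β) 0 (Set.Iic (1/2 : ℝ)) (1/2 : ℝ) := by
    apply (hG.hasDerivWithinAt).congr
    · intro s hs
      rw [FBeta_eq, min_eq_left (by simp only [Set.mem_Iic] at hs; linarith)]
    · rw [FBeta_eq, min_eq_left (by norm_num)]
  have hR : HasDerivWithinAt (FBeta β) 0 (Set.Ici (1/2 : ℝ)) (1/2 : ℝ) := by
    apply (hGR.hasDerivWithinAt).congr
    · intro s hs
      rw [FBeta_eq, min_eq_right (by simp only [Set.mem_Ici] at hs; linarith)]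
    · rw [FBeta_eq, min_eq_right (by norm_num)]
  have := hL.union hR
  rw [Set.Iic_union_Ici] at this
  exact this.hasDerivAt Filter.univ_mem

/-- The derivative of `FBeta β`. -/
noncomputable def Db (β t : ℝ) : ℝ :=
  if t ≤ 1/2 then Real.log (fBeta β t) else -Real.log (fBeta β (1-t))

lemma F_hasDeriv {β : ℝ} (hβ : 0 ≤ β) {t : ℝ} (ht : t ∈ Set.Ioo (0:ℝ) 1) :
    HasDerivAt (FBeta β) (Db β t) t := by
  rcases lt_trichotomy t (1/2) with h | h | h
  · rw [show Db β t = Real.log (fBeta β t) from if_pos h.le]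
    exact F_deriv_lt hβ h
  · have : Db β t = 0 := by
      rw [show Db β t = Real.log (fBeta β t) from if_pos h.le, h, fBeta_half, Real.log_one]
    rw [this, h]
    exact F_deriv_half hβ
  · rw [show Db β t = -Real.log (fBeta β (1-t)) from if_neg (not_le.2 h)]
    exact F_deriv_gt hβ h

lemma Db_mono {β : ℝ} (hβ : 0 ≤ β) : MonotoneOn (Db β) (Set.Ioo (0:ℝ) 1) := by
  intro s hs t ht hst
  by_cases h1 : s ≤ 1/2 <;> by_cases h2 : t ≤ 1/2
  · rw [show Db β s = Real.log (fBeta β s) from if_pos h1,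
      show Db β t = Real.log (fBeta β t) from if_pos h2]
    exact log_mono hβ hs.1.le hst h2
  · rw [show Db β s = Real.log (fBeta β s) from if_pos h1,
      show Db β t = -Real.log (fBeta β (1-t)) from if_neg h2]
    have ha := log_nonpos' hβ hs.1.le h1
    have hb := log_nonpos' hβ (by linarith [ht.2] : (0:ℝ) ≤ 1-t)
      (by push_neg at h2; linarith : 1-t ≤ 1/2)
    linarith
  · exact absurd (hst.trans h2) h1
  · rw [show Db β s = -Real.log (fBeta β (1-s)) from if_neg h1,
      show Db β t = -Real.log (fBeta β (1-t)) from if_neg h2]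
    push_neg at h1
    have := log_mono hβ (by linarith [ht.2] : (0:ℝ) ≤ 1-t)
      (by linarith : 1-t ≤ 1-s) (by linarith : 1-s ≤ 1/2)
    linarith

lemma min_le_half (t : ℝ) : min t (1-t) ≤ 1/2 := by
  rcases le_total t (1-t) with h | h
  · rw [min_eq_left h]; linarith
  · rw [min_eq_right h]; linarith

end FBetaAux

open FBetaAux Set intervalIntegral MeasureTheory in
/-- for `β ≥ 0`: (i) `F_β(t) = F_β(1-t)` on `[0,1]`; (ii) `F_β(t) ≤ 0` on `[0,1]`;
(iii) `F_β` is nonincreasing on `[0,1/2]`; (iv) `F_β` is convex on `[0,1]`. -/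
theorem FBeta_symm_nonpos_antitone_convex (β : ℝ) (hβ : 0 ≤ β) :
    (∀ t ∈ Set.Icc (0:ℝ) 1, FBeta β t = FBeta β (1 - t)) ∧
    (∀ t ∈ Set.Icc (0:ℝ) 1, FBeta β t ≤ 0) ∧
    AntitoneOn (FBeta β) (Set.Icc (0:ℝ) (1/2)) ∧
    ConvexOn ℝ (Set.Icc (0:ℝ) 1) (FBeta β) := by
  refine ⟨?_, ?_, ?_, ?_⟩
  · -- (i) symmetry
    intro t _
    unfold FBeta
    rw [sub_sub_cancel, min_comm]
  · -- (ii) nonpositivity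
    rintro t ⟨ht0, ht1⟩
    set m := min t (1-t) with hm
    have hm0 : 0 ≤ m := le_min ht0 (by linarith)
    have hmh : m ≤ 1/2 := min_le_half t
    have hnn : (0:ℝ) ≤ ∫ u in (0:ℝ)..m, -Real.log (fBeta β u) :=
      intervalIntegral.integral_nonneg hm0 fun u hu =>
        neg_nonneg.2 (log_nonpos' hβ hu.1 (hu.2.trans hmh))
    rw [intervalIntegral.integral_neg] at hnn
    have : FBeta β t = ∫ u in (0:ℝ)..m, Real.log (fBeta β u) := rfl
    linarith
  · -- (iii) antitone on [0,1/2]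
    rintro s ⟨hs0, hs1⟩ t ⟨ht0, ht1⟩ hst
    have hes : FBeta β s = ∫ u in (0:ℝ)..s, Real.log (fBeta β u) := by
      rw [FBeta_eq, min_eq_left (by linarith)]; rfl
    have het : FBeta β t = ∫ u in (0:ℝ)..t, Real.log (fBeta β u) := by
      rw [FBeta_eq, min_eq_left (by linarith)]; rfl
    have hsplit := intervalIntegral.integral_add_adjacent_intervals
      (intInt hβ (by norm_num : (0:ℝ) < 1) (by linarith : s < 1))
      (intInt hβ (by linarith : s < 1) (by linarith : t < 1))
    have hnn : (0:ℝ) ≤ ∫ u in s..t, -Real.log (fBeta β u) :=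
      intervalIntegral.integral_nonneg hst fun u hu =>
        neg_nonneg.2 (log_nonpos' hβ (hs0.trans hu.1) (hu.2.trans ht1))
    rw [intervalIntegral.integral_neg] at hnn
    rw [hes, het, ← hsplit]
    linarith
  · -- (iv) convexity
    apply MonotoneOn.convexOn_of_deriv (convex_Icc 0 1)
    · -- continuity
      have hGc : ContinuousOn (Gb β) (Set.Iio 1) := fun x hx =>
        ((Gb_deriv hβ hx).continuousAt).continuousWithinAt
    -- FBeta β = Gb β ∘ min
      have hmin : Continuous fun t : ℝ => min t (1-t) :=
        continuous_id.min (continuous_const.sub continuous_id)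
      have : ContinuousOn (fun t => Gb β (min t (1-t))) (Set.Icc (0:ℝ) 1) :=
        hGc.comp hmin.continuousOn fun t _ =>
          Set.mem_Iio.2 (lt_of_le_of_lt (min_le_half t) (by norm_num))
      exact this
    · rw [interior_Icc]
      intro x hx
      exact (F_hasDeriv hβ hx).differentiableAt.differentiableWithinAt
    · rw [interior_Icc]
      intro s hs t ht hst
      rw [(F_hasDeriv hβ hs).deriv, (F_hasDeriv hβ ht).deriv]
      exact Db_mono hβ hs ht hst
end

section
/- Fix β ≥ 0 and B ≥ 0. For all s, t ∈ [0,1]^ℕ, |G_{β,B}(s) − G_{β,B}(t)| ≤ ∑_{k≥1} p_k |I(s_k) − I(t_k)| + (2B + 2β) ∑_{k≥1} k p_k |s_k − t_k|. -/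
open Filter Topology

/-- The entropy function `I(t) = -t log t - (1-t) log(1-t)` (with `I(0) = I(1) = 0`,
using the convention `log 0 = 0`). -/
noncomputable def entI (t : ℝ) : ℝ := -t * Real.log t - (1-t) * Real.log (1-t)

/-- The mean `E[D] = ∑_{k≥1} k p_k` of a degree distribution `p`. -/
noncomputable def meanD (p : ℕ → ℝ) : ℝ := ∑' (k : ℕ), (k : ℝ) * p k

/-- The functional
`G_{β,B}(s) = ∑_k p_k I(s_k) + B(2 ∑_k s_k p_k − 1) + E[D]·F_β((∑_k k p_k s_k)/E[D])`. -/
noncomputable def Gfun (p : ℕ → ℝ) (β B : ℝ) (s : ℕ → ℝ) : ℝ :=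
  (∑' k, p k * entI (s k)) + B * (2 * (∑' k, s k * p k) - 1)
    + meanD p * FBeta β ((∑' (k : ℕ), (k : ℝ) * p k * s k) / meanD p)

/-- The cube `[0,1]^ℕ`. -/
def unitCube : Set (ℕ → ℝ) := {s | ∀ k, s k ∈ Set.Icc (0:ℝ) 1}

/-! `G` splits into an entropy sum, a linear term and `E[D]·F_β(x/E[D])`; the first is bounded
termwise, the second because `p_k ≤ k p_k` (as `p_0 = 0`), and the third because
`e^{-2β} ≤ f_β ≤ 1` on `[0, 1/2]`, so that `|log f_β| ≤ 2β` and `F_β` is `2β`-Lipschitz on `[0,1]`. -/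

open Real Set

section WeightedSums

variable {ι : Type*} {w a b : ι → ℝ}

lemma Summable.mul_of_abs_le (hw : Summable w) (hw0 : ∀ i, 0 ≤ w i) {C : ℝ}
    (ha : ∀ i, |a i| ≤ C) : Summable fun i => w i * a i :=
  (hw.mul_left C).of_norm_bounded fun i => by
    rw [norm_mul, norm_of_nonneg (hw0 i), norm_eq_abs, mul_comm]
    exact mul_le_mul_of_nonneg_right (ha i) (hw0 i)

lemma abs_tsum_mul_sub_tsum_mul_le (hw0 : ∀ i, 0 ≤ w i) (ha : Summable fun i => w i * a i)
    (hb : Summable fun i => w i * b i) :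
    |∑' i, w i * a i - ∑' i, w i * b i| ≤ ∑' i, w i * |a i - b i| := by
  have hab : Summable fun i => w i * a i - w i * b i := ha.sub hb
  rw [← ha.tsum_sub hb]
  calc |∑' i, (w i * a i - w i * b i)| ≤ ∑' i, |w i * a i - w i * b i| := by
        simpa only [norm_eq_abs] using norm_tsum_le_tsum_norm hab.norm
    _ = ∑' i, w i * |a i - b i| := by
        simp only [← mul_sub, abs_mul, abs_of_nonneg (hw0 _)]

end WeightedSums

lemma entI_eq_binEntropy (x : ℝ) : entI x = binEntropy x := by
  rw [entI, binEntropy, log_inv, log_inv]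
  ring

lemma abs_entI_le {x : ℝ} (hx : x ∈ Icc (0:ℝ) 1) : |entI x| ≤ log 2 := by
  rw [entI_eq_binEntropy, abs_of_nonneg (binEntropy_nonneg hx.1 hx.2)]
  exact binEntropy_le_log_two

section FBeta

variable {β : ℝ}

lemma fBeta_mem_Icc (hβ : 0 ≤ β) {u : ℝ} (hu : u ∈ Icc (0:ℝ) (1/2)) :
    fBeta β u ∈ Icc (exp (-2*β)) 1 := by
  obtain ⟨hu0, hu1⟩ := hu
  set q := exp (-2*β)
  have hq0 : 0 < q := exp_pos _
  have hq1 : q ≤ 1 := exp_le_one_iff.mpr (by linarith)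
  have hq2 : exp (-4*β) = q^2 := by rw [← exp_nat_mul]; ring_nf
  have hv : (1 - 2*u)^2 ≤ 1 := by nlinarith
  have hq2le : q^2 ≤ 1 := by nlinarith
  have hsqrt_ge : q ≤ √(1 + (q^2 - 1) * (1 - 2*u)^2) :=
    (le_sqrt' hq0).mpr (by nlinarith [mul_nonneg (sub_nonneg.mpr hv) (sub_nonneg.mpr hq1)])
  have hsqrt_le : √(1 + (q^2 - 1) * (1 - 2*u)^2) ≤ 1 :=
    sqrt_le_one.mpr (by nlinarith [mul_nonneg (sub_nonneg.mpr hq2le) (sq_nonneg (1 - 2*u))])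
  have hden : 0 < 2*(1-u) := by linarith
  rw [fBeta, hq2]
  constructor
  · rw [le_div_iff₀ hden]; nlinarith
  · rw [div_le_one hden]; nlinarith

lemma abs_log_fBeta_le (hβ : 0 ≤ β) {u : ℝ} (hu : u ∈ Icc (0:ℝ) (1/2)) :
    |log (fBeta β u)| ≤ 2*β := by
  obtain ⟨hlow, hup⟩ := fBeta_mem_Icc hβ hu
  have hpos : 0 < fBeta β u := (exp_pos _).trans_le hlow
  rw [abs_of_nonpos (log_nonpos hpos.le hup), neg_le, ← neg_mul, ← log_exp (-2*β)]
  exact log_le_log (exp_pos _) hlow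

lemma continuousOn_log_fBeta (hβ : 0 ≤ β) :
    ContinuousOn (fun u => log (fBeta β u)) (Icc (0:ℝ) (1/2)) := by
  have hf : ContinuousOn (fBeta β) (Icc (0:ℝ) (1/2)) :=
    ContinuousOn.div (by fun_prop) (by fun_prop) fun u hu => by linarith [hu.2]
  exact hf.log fun u hu => ((exp_pos _).trans_le (fBeta_mem_Icc hβ hu).1).ne'

lemma abs_FBeta_sub_le (hβ : 0 ≤ β) {a b : ℝ} (ha : a ∈ Icc (0:ℝ) 1) (hb : b ∈ Icc (0:ℝ) 1) :
    |FBeta β a - FBeta β b| ≤ 2*β * |a - b| := by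
  have hmin : ∀ x ∈ Icc (0:ℝ) 1, min x (1-x) ∈ Icc (0:ℝ) (1/2) := fun x hx =>
    ⟨le_min hx.1 (by linarith [hx.2]), by
      rcases le_total x (1/2) with h | h
      exacts [(min_le_left _ _).trans h, (min_le_right _ _).trans (by linarith)]⟩
  have hint : ∀ x ∈ Icc (0:ℝ) 1,
      IntervalIntegrable (fun u => log (fBeta β u)) MeasureTheory.volume 0 (min x (1-x)) :=
    fun x hx => ((continuousOn_log_fBeta hβ).mono
      (uIcc_subset_Icc ⟨le_rfl, by norm_num⟩ (hmin x hx))).intervalIntegrable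
  rw [FBeta, FBeta, intervalIntegral.integral_interval_sub_left (hint a ha) (hint b hb)]
  calc ‖∫ u in min b (1-b)..min a (1-a), log (fBeta β u)‖
        ≤ 2*β * |min a (1-a) - min b (1-b)| :=
        intervalIntegral.norm_integral_le_of_norm_le_const fun u hu =>
          abs_log_fBeta_le hβ (uIcc_subset_Icc (hmin b hb) (hmin a ha) (uIoc_subset_uIcc hu))
    _ ≤ 2*β * |a - b| := by
        refine mul_le_mul_of_nonneg_left ?_ (by positivity)
        refine (abs_min_sub_min_le_max _ _ _ _).trans (max_le le_rfl ?_)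
        rw [sub_sub_sub_cancel_left, abs_sub_comm]

lemma mul_abs_FBeta_div_sub_le (hβ : 0 ≤ β) {E x y : ℝ} (hx : x ∈ Icc 0 E) (hy : y ∈ Icc 0 E) :
    E * |FBeta β (x / E) - FBeta β (y / E)| ≤ 2*β * |x - y| := by
  rcases (hx.1.trans hx.2).eq_or_lt with hE | hE
  · rw [← hE, zero_mul]
    positivity
  have hmem : ∀ z ∈ Icc 0 E, z / E ∈ Icc (0:ℝ) 1 := fun z hz =>
    ⟨div_nonneg hz.1 hE.le, (div_le_one hE).mpr hz.2⟩
  calc E * |FBeta β (x / E) - FBeta β (y / E)| ≤ E * (2*β * |x / E - y / E|) := by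
        gcongr
        exact abs_FBeta_sub_le hβ (hmem x hx) (hmem y hy)
    _ = 2*β * |x - y| := by
        rw [div_sub_div_same, abs_div, abs_of_pos hE]
        field_simp

end FBeta

lemma abs_add_mul_add_mul_sub_le {a a' l l' f f' B E c S X : ℝ} (hB : 0 ≤ B) (hE : 0 ≤ E)
    (ha : |a - a'| ≤ S) (hl : |l - l'| ≤ X) (hf : E * |f - f'| ≤ c * X) :
    |(a + B * (2 * l - 1) + E * f) - (a' + B * (2 * l' - 1) + E * f')| ≤ S + (2 * B + c) * X := by
  have hsplit : (a + B * (2 * l - 1) + E * f) - (a' + B * (2 * l' - 1) + E * f')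
      = (a - a') + 2 * B * (l - l') + E * (f - f') := by ring
  rw [hsplit]
  calc |(a - a') + 2 * B * (l - l') + E * (f - f')|
        ≤ |a - a'| + 2 * B * |l - l'| + E * |f - f'| := by
        have h2B : |2 * B * (l - l')| = 2 * B * |l - l'| := by
          rw [abs_mul, abs_of_nonneg (by positivity : (0:ℝ) ≤ 2 * B)]
        have hEf : |E * (f - f')| = E * |f - f'| := by rw [abs_mul, abs_of_nonneg hE]
        rw [← h2B, ← hEf]
        exact (abs_add_le _ _).trans (add_le_add_left (abs_add_le _ _) _)
    _ ≤ S + (2 * B + c) * X := by nlinarith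

section DegreeDistribution

variable {p : ℕ → ℝ} {s t : ℕ → ℝ}

lemma abs_le_one_of_mem_unitCube (hs : s ∈ unitCube) (k : ℕ) : |s k| ≤ 1 :=
  abs_le.mpr ⟨by linarith [(hs k).1], (hs k).2⟩

lemma natCast_mul_nonneg_of_nonneg (hp : ∀ k, 0 ≤ p k) (k : ℕ) : 0 ≤ (k:ℝ) * p k :=
  mul_nonneg k.cast_nonneg (hp k)

lemma le_natCast_mul_of_apply_zero (hp : ∀ k, 0 ≤ p k) (hp0 : p 0 = 0) (k : ℕ) :
    p k ≤ k * p k := by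
  rcases k with _ | k
  · simp [hp0]
  · exact le_mul_of_one_le_left (hp _) (by simp)

lemma tsum_natCast_mul_mul_mem_Icc (hp : ∀ k, 0 ≤ p k)
    (hmean : Summable fun k : ℕ => (k:ℝ) * p k) (hs : s ∈ unitCube) :
    ∑' k : ℕ, (k:ℝ) * p k * s k ∈ Icc 0 (meanD p) := by
  have hw := natCast_mul_nonneg_of_nonneg hp
  refine ⟨tsum_nonneg fun k => mul_nonneg (hw k) (hs k).1, ?_⟩
  exact (hmean.mul_of_abs_le hw (abs_le_one_of_mem_unitCube hs)).tsum_le_tsum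
    (fun k => mul_le_of_le_one_right (hw k) (hs k).2) hmean

lemma summable_of_summable_natCast_mul (hp : ∀ k, 0 ≤ p k) (hp0 : p 0 = 0)
    (hmean : Summable fun k : ℕ => (k:ℝ) * p k) : Summable p :=
  hmean.of_nonneg_of_le hp (le_natCast_mul_of_apply_zero hp hp0)

lemma abs_tsum_mul_entI_sub_le (hp : ∀ k, 0 ≤ p k) (hps : Summable p) (hs : s ∈ unitCube)
    (ht : t ∈ unitCube) :
    |∑' k, p k * entI (s k) - ∑' k, p k * entI (t k)| ≤ ∑' k, p k * |entI (s k) - entI (t k)| :=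
  abs_tsum_mul_sub_tsum_mul_le hp (hps.mul_of_abs_le hp fun k => abs_entI_le (hs k))
    (hps.mul_of_abs_le hp fun k => abs_entI_le (ht k))

lemma abs_tsum_mul_sub_le_tsum_natCast_mul (hp : ∀ k, 0 ≤ p k) (hp0 : p 0 = 0)
    (hmean : Summable fun k : ℕ => (k:ℝ) * p k) (hs : s ∈ unitCube) (ht : t ∈ unitCube) :
    |∑' k, s k * p k - ∑' k, t k * p k| ≤ ∑' k : ℕ, (k:ℝ) * p k * |s k - t k| := by
  have hps := summable_of_summable_natCast_mul hp hp0 hmean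
  have hw := natCast_mul_nonneg_of_nonneg hp
  have hst : ∀ k, |(|s k - t k|)| ≤ 1 := fun k => by
    rw [abs_abs]
    exact abs_sub_le_of_nonneg_of_le (hs k).1 (hs k).2 (ht k).1 (ht k).2
  simp only [mul_comm (s _), mul_comm (t _)]
  calc |∑' k, p k * s k - ∑' k, p k * t k| ≤ ∑' k, p k * |s k - t k| :=
        abs_tsum_mul_sub_tsum_mul_le hp (hps.mul_of_abs_le hp (abs_le_one_of_mem_unitCube hs))
          (hps.mul_of_abs_le hp (abs_le_one_of_mem_unitCube ht))
    _ ≤ ∑' k : ℕ, (k:ℝ) * p k * |s k - t k| :=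
        (hps.mul_of_abs_le hp hst).tsum_le_tsum
          (fun k => mul_le_mul_of_nonneg_right (le_natCast_mul_of_apply_zero hp hp0 k) (abs_nonneg _))
          (hmean.mul_of_abs_le hw hst)

lemma meanD_mul_abs_FBeta_sub_le {β : ℝ} (hβ : 0 ≤ β) (hp : ∀ k, 0 ≤ p k)
    (hmean : Summable fun k : ℕ => (k:ℝ) * p k) (hs : s ∈ unitCube) (ht : t ∈ unitCube) :
    meanD p * |FBeta β ((∑' k : ℕ, (k:ℝ) * p k * s k) / meanD p)
        - FBeta β ((∑' k : ℕ, (k:ℝ) * p k * t k) / meanD p)|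
      ≤ 2*β * ∑' k : ℕ, (k:ℝ) * p k * |s k - t k| := by
  have hw := natCast_mul_nonneg_of_nonneg hp
  refine (mul_abs_FBeta_div_sub_le hβ (tsum_natCast_mul_mul_mem_Icc hp hmean hs)
    (tsum_natCast_mul_mul_mem_Icc hp hmean ht)).trans (mul_le_mul_of_nonneg_left ?_ (by positivity))
  exact abs_tsum_mul_sub_tsum_mul_le hw (hmean.mul_of_abs_le hw (abs_le_one_of_mem_unitCube hs))
    (hmean.mul_of_abs_le hw (abs_le_one_of_mem_unitCube ht))

end DegreeDistribution

theorem Gfun_diff_bound_general (p : ℕ → ℝ) (hp : ∀ k, 0 ≤ p k) (hp0 : p 0 = 0)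
    (hmean : Summable fun k : ℕ => (k:ℝ) * p k)
    (β B : ℝ) (hβ : 0 ≤ β) (hB : 0 ≤ B)
    (s t : ℕ → ℝ) (hs : s ∈ unitCube) (ht : t ∈ unitCube) :
    |Gfun p β B s - Gfun p β B t| ≤
      (∑' k, p k * |entI (s k) - entI (t k)|)
        + (2*B + 2*β) * ∑' (k : ℕ), (k:ℝ) * p k * |s k - t k| := by
  have hE : 0 ≤ meanD p := tsum_nonneg (natCast_mul_nonneg_of_nonneg hp)
  rw [Gfun, Gfun]
  exact abs_add_mul_add_mul_sub_le hB hE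
    (abs_tsum_mul_entI_sub_le hp (summable_of_summable_natCast_mul hp hp0 hmean) hs ht)
    (abs_tsum_mul_sub_le_tsum_natCast_mul hp hp0 hmean hs ht)
    (meanD_mul_abs_FBeta_sub_le hβ hp hmean hs ht)

/-- for `β ≥ 0`, `B ≥ 0` and `s, t ∈ [0,1]^ℕ`,
`|G_{β,B}(s) − G_{β,B}(t)| ≤ ∑_k p_k |I(s_k) − I(t_k)| + (2B + 2β) ∑_k k p_k |s_k − t_k|`. -/
theorem Gfun_diff_bound (p : ℕ → ℝ) (hp : ∀ k, 0 ≤ p k) (hp0 : p 0 = 0)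
    (hpsum : (∑' k, p k) = 1) (hmean : Summable fun k : ℕ => (k:ℝ) * p k)
    (β B : ℝ) (hβ : 0 ≤ β) (hB : 0 ≤ B)
    (s t : ℕ → ℝ) (hs : s ∈ unitCube) (ht : t ∈ unitCube) :
    |Gfun p β B s - Gfun p β B t| ≤
      (∑' k, p k * |entI (s k) - entI (t k)|)
        + (2*B + 2*β) * ∑' (k : ℕ), (k:ℝ) * p k * |s k - t k| :=
  Gfun_diff_bound_general p hp hp0 hmean β B hβ hB s t hs ht
end

section
/- For every λ > 0, the number β̄ = −log(2λ²) + log(1 + sqrt(1 + 4λ⁴) + sqrt(2 + 2 sqrt(1 + 4λ⁴))) is strictly positive and satisfies cosh(β̄) = λ² (cosh(β̄)² − 1), equivalently tanh(β̄) · λ · sqrt(cosh(β̄)) = 1. -/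
/-!
Put `c = (1 + √(1 + 4λ⁴)) / (2λ²)`, the positive root of `λ²c² − c − λ² = 0`. Then
`c² − 1 = (2 + 2√(1 + 4λ⁴)) / (4λ⁴)`, so `β̄ = log (c + √(c² − 1)) = arcosh c`, and `c > 1`.
Hence `β̄ > 0` and `cosh β̄ = c = λ²(c² − 1)`. The tanh identity follows from
`sinh² β̄ = cosh² β̄ − 1 = cosh β̄ / λ²`.
-/

open Real

noncomputable def criticalCosh (lam : ℝ) : ℝ := (1 + √(1 + 4 * lam ^ 4)) / (2 * lam ^ 2)

section

variable {lam : ℝ}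

lemma criticalCosh_eq_sq_mul_sq_sub_one (hlam : lam ≠ 0) :
    criticalCosh lam = lam ^ 2 * (criticalCosh lam ^ 2 - 1) := by
  have hs : √(1 + 4 * lam ^ 4) ^ 2 = 1 + 4 * lam ^ 4 := sq_sqrt (by positivity)
  unfold criticalCosh
  field_simp
  linear_combination -hs

lemma one_lt_criticalCosh (hlam : lam ≠ 0) : 1 < criticalCosh lam := by
  have hl : 0 < 2 * lam ^ 2 := by positivity
  have hs : 2 * lam ^ 2 < √(1 + 4 * lam ^ 4) :=
    lt_sqrt_of_sq_lt (by nlinarith)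
  rw [criticalCosh, one_lt_div hl]
  linarith

lemma sqrt_criticalCosh_sq_sub_one (hlam : lam ≠ 0) :
    √(criticalCosh lam ^ 2 - 1) = √(2 + 2 * √(1 + 4 * lam ^ 4)) / (2 * lam ^ 2) := by
  have hl : 0 < 2 * lam ^ 2 := by positivity
  have hs : √(1 + 4 * lam ^ 4) ^ 2 = 1 + 4 * lam ^ 4 := sq_sqrt (by positivity)
  rw [← sqrt_sq hl.le, ← sqrt_div' _ (sq_nonneg _)]
  congr 1
  unfold criticalCosh
  field_simp
  linear_combination hs

lemma arcosh_criticalCosh (hlam : lam ≠ 0) :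
    arcosh (criticalCosh lam) = -log (2 * lam ^ 2)
      + log (1 + √(1 + 4 * lam ^ 4) + √(2 + 2 * √(1 + 4 * lam ^ 4))) := by
  have hl : 0 < 2 * lam ^ 2 := by positivity
  have hA : 0 < 1 + √(1 + 4 * lam ^ 4) + √(2 + 2 * √(1 + 4 * lam ^ 4)) := by positivity
  rw [arcosh, sqrt_criticalCosh_sq_sub_one hlam, criticalCosh, ← add_div,
    log_div hA.ne' hl.ne']
  ring

end

lemma tanh_mul_mul_sqrt_cosh_eq_one {lam x : ℝ} (hlam : 0 < lam) (hx : 0 ≤ x)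
    (h : cosh x = lam ^ 2 * (cosh x ^ 2 - 1)) :
    tanh x * (lam * √(cosh x)) = 1 := by
  have hc := cosh_pos x
  have hsinh_sq : sinh x ^ 2 * lam ^ 2 = cosh x := by
    rw [h, cosh_sq]
    ring
  have hnonneg : 0 ≤ tanh x * (lam * √(cosh x)) := by
    rw [tanh_eq_sinh_div_cosh]
    have := sinh_nonneg_iff.mpr hx
    positivity
  refine (pow_eq_one_iff_of_nonneg hnonneg two_ne_zero).mp ?_
  rw [tanh_eq_sinh_div_cosh, mul_pow, div_pow, mul_pow, sq_sqrt hc.le]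
  field_simp
  exact hsinh_sq

/-- for every `λ > 0`, the number
`β̄ = −log(2λ²) + log(1 + √(1+4λ⁴) + √(2 + 2√(1+4λ⁴)))` is strictly positive and satisfies
`cosh β̄ = λ²(cosh²β̄ − 1)`, equivalently `tanh β̄ · λ √(cosh β̄) = 1`. -/
theorem poisson_annealed_critical_value (lam βb : ℝ) (hlam : 0 < lam)
    (hβb : βb = -Real.log (2 * lam^2)
      + Real.log (1 + Real.sqrt (1 + 4 * lam^4)
          + Real.sqrt (2 + 2 * Real.sqrt (1 + 4 * lam^4)))) :
    0 < βb ∧ Real.cosh βb = lam^2 * ((Real.cosh βb)^2 - 1) ∧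
      Real.tanh βb * (lam * Real.sqrt (Real.cosh βb)) = 1 := by
  have hc := one_lt_criticalCosh hlam.ne'
  rw [← arcosh_criticalCosh hlam.ne'] at hβb
  have hpos : 0 < βb := hβb ▸ arcosh_pos hc
  have hcosh : cosh βb = lam ^ 2 * (cosh βb ^ 2 - 1) := by
    rw [hβb, cosh_arcosh hc.le]
    exact criticalCosh_eq_sq_mul_sq_sub_one hlam.ne'
  exact ⟨hpos, hcosh, tanh_mul_mul_sqrt_cosh_eq_one hlam hpos.le hcosh⟩
end
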